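/- Let φ : ℝᵐ → ℝ be convex, let ψ : ℝⁿ → ℝᵐ be piecewise affine, let X ⊆ ℝⁿ be a closed convex set, and set f := φ ∘ ψ. Then every directional stationary point of the problem min_{x∈X} f(x) is a local minimizer of f on X. -/
import Mathlib


open Filter Topology Set

noncomputable section

/-- Euclidean norm on `Fin n → ℝ`. -/
def n2 {n : ℕ} (v : Fin n → ℝ) : ℝ := Real.sqrt (∑ i, v i ^ 2)

/-- A polyhedron `{x : Ax ≤ b}`. -/
def IsPolyhedron {n : ℕ} (S : Set (Fin n → ℝ)) : Prop :=
  ∃ (m : ℕ) (A : Matrix (Fin m) (Fin n) ℝ) (b : Fin m → ℝ),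
    S = {x | ∀ i, (∑ j, A i j * x j) ≤ b i}

/-- One-sided directional derivative: `f'(x;v) = d`. -/
def HasDirDeriv {n : ℕ} (f : (Fin n → ℝ) → ℝ) (x v : Fin n → ℝ) (d : ℝ) : Prop :=
  Tendsto (fun τ : ℝ => (f (x + τ • v) - f x) / τ) (𝓝[>] 0) (𝓝 d)

/-- Local minimizer of `f` on `X`. -/
def IsLocMin' {n : ℕ} (f : (Fin n → ℝ) → ℝ) (X : Set (Fin n → ℝ)) (xbar : Fin n → ℝ) : Prop :=
  xbar ∈ X ∧ ∃ ε > (0:ℝ), ∀ y ∈ X, n2 (y - xbar) < ε → f xbar ≤ f y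

/-- A vector function `ψ : ℝⁿ → ℝᵐ` is piecewise affine: `ℝⁿ` is a finite union of
polyhedra on each of which `ψ` agrees with an affine map. -/
def IsPAVec {n m : ℕ} (ψ : (Fin n → ℝ) → (Fin m → ℝ)) : Prop :=
  Continuous ψ ∧ ∃ (I : ℕ) (P : Fin I → Set (Fin n → ℝ))
    (B : Fin I → Matrix (Fin m) (Fin n) ℝ) (d : Fin I → Fin m → ℝ),
    (∀ i, IsPolyhedron (P i)) ∧ (⋃ i, P i) = Set.univ ∧
    ∀ i, ∀ x ∈ P i, ψ x = fun k => (∑ j, B i k j * x j) + d i k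

lemma abs_le_n2 {n : ℕ} (v : Fin n → ℝ) (j : Fin n) : |v j| ≤ n2 v := by
  rw [n2, ← Real.sqrt_sq_eq_abs]
  exact Real.sqrt_le_sqrt (Finset.single_le_sum (f := fun i => v i ^ 2)
    (fun i _ => sq_nonneg _) (Finset.mem_univ j))

lemma IsPolyhedron.isClosed' {n : ℕ} {S : Set (Fin n → ℝ)} (h : IsPolyhedron S) :
    IsClosed S := by
  obtain ⟨m, A, b, rfl⟩ := h
  have : {x : Fin n → ℝ | ∀ i, (∑ j, A i j * x j) ≤ b i}
      = ⋂ i, {x | (∑ j, A i j * x j) ≤ b i} := by ext x; simp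
  rw [this]
  refine isClosed_iInter fun i => isClosed_le ?_ continuous_const
  exact continuous_finset_sum _ fun j _ => continuous_const.mul (continuous_apply j)

lemma IsPolyhedron.convex' {n : ℕ} {S : Set (Fin n → ℝ)} (h : IsPolyhedron S) :
    Convex ℝ S := by
  obtain ⟨m, A, b, rfl⟩ := h
  intro y hy z hz a c ha hc hac
  intro i
  have hy' := hy i
  have hz' := hz i
  have : (∑ j, A i j * (a • y + c • z) j) = a * (∑ j, A i j * y j) + c * (∑ j, A i j * z j) := by
    rw [Finset.mul_sum, Finset.mul_sum, ← Finset.sum_add_distrib]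
    refine Finset.sum_congr rfl fun j _ => ?_
    simp only [Pi.add_apply, Pi.smul_apply, smul_eq_mul]
    ring
  rw [this]
  calc a * (∑ j, A i j * y j) + c * (∑ j, A i j * z j)
      ≤ a * b i + c * b i := by
        exact add_le_add (mul_le_mul_of_nonneg_left hy' ha) (mul_le_mul_of_nonneg_left hz' hc)
    _ = b i := by rw [← add_mul, hac, one_mul]

/-- If `φ` is convex, `ψ` is piecewise affine, and `X` is closed and
convex, then every directional stationary point of `min_{x∈X} φ(ψ(x))` is a local
minimizer. -/
theorem stmt12 {n m : ℕ} (φ : (Fin m → ℝ) → ℝ) (hφ : ConvexOn ℝ Set.univ φ)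
    (ψ : (Fin n → ℝ) → (Fin m → ℝ)) (hψ : IsPAVec ψ)
    (X : Set (Fin n → ℝ)) (hXconv : Convex ℝ X) (hXcl : IsClosed X)
    (xbar : Fin n → ℝ) (hxbar : xbar ∈ X)
    (hstat : ∀ x ∈ X, ∃ d, HasDirDeriv (fun w => φ (ψ w)) xbar (x - xbar) d ∧ 0 ≤ d) :
    IsLocMin' (fun w => φ (ψ w)) X xbar := by
  obtain ⟨hcont, I, P, B, D, hpoly, hcover, haff⟩ := hψ
  set K : Set (Fin n → ℝ) := ⋃ (i : Fin I) (_ : xbar ∉ P i), P i with hK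
  have hKclosed : IsClosed K := by
    exact isClosed_iUnion_of_finite fun i =>
      isClosed_iUnion_of_finite fun _ => (hpoly i).isClosed'
  have hxK : xbar ∉ K := by
    simp only [hK, mem_iUnion]
    rintro ⟨i, h, hx⟩
    exact h hx
  obtain ⟨ε, hε, hball⟩ := Metric.mem_nhds_iff.mp (hKclosed.isOpen_compl.mem_nhds hxK)
  refine ⟨hxbar, ε, hε, ?_⟩
  intro y hy hyε
  have hyK : y ∉ K := by
    apply hball
    rw [Metric.mem_ball, dist_pi_lt_iff hε]
    intro j
    calc dist (y j) (xbar j) = |(y - xbar) j| := by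
          simp [Real.dist_eq]
      _ ≤ n2 (y - xbar) := abs_le_n2 _ _
      _ < ε := hyε
  have hyu : y ∈ ⋃ i, P i := by rw [hcover]; exact mem_univ y
  obtain ⟨i, hyi⟩ := mem_iUnion.mp hyu
  have hxi : xbar ∈ P i := by
    by_contra h
    exact hyK (mem_iUnion.mpr ⟨i, mem_iUnion.mpr ⟨h, hyi⟩⟩)
  have hconv := (hpoly i).convex'
  have hseg : ∀ τ : ℝ, 0 ≤ τ → τ ≤ 1 →
      ψ (xbar + τ • (y - xbar)) = (1 - τ) • ψ xbar + τ • ψ y := by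
    intro τ hτ0 hτ1
    have heq : xbar + τ • (y - xbar) = (1 - τ) • xbar + τ • y := by
      funext j; simp [smul_eq_mul]; ring
    have hmem : xbar + τ • (y - xbar) ∈ P i := by
      rw [heq]; exact hconv hxi hyi (by linarith) hτ0 (by ring)
    rw [haff i _ hmem, haff i _ hxi, haff i _ hyi]
    funext k
    simp only [Pi.add_apply, Pi.smul_apply, Pi.sub_apply, smul_eq_mul]
    have : (∑ j, B i k j * (xbar j + τ * (y j - xbar j)))
        = (1 - τ) * (∑ j, B i k j * xbar j) + τ * (∑ j, B i k j * y j) := by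
      rw [Finset.mul_sum, Finset.mul_sum, ← Finset.sum_add_distrib]
      refine Finset.sum_congr rfl fun j _ => ?_
      ring
    rw [this]
    ring
  have key : ∀ τ : ℝ, τ ∈ Set.Ioc (0:ℝ) 1 →
      (φ (ψ (xbar + τ • (y - xbar))) - φ (ψ xbar)) / τ ≤ φ (ψ y) - φ (ψ xbar) := by
    rintro τ ⟨hτ0, hτ1⟩
    rw [hseg τ hτ0.le hτ1]
    have hcv := hφ.2 (mem_univ (ψ xbar)) (mem_univ (ψ y))
      (by linarith : (0:ℝ) ≤ 1 - τ) hτ0.le (by ring)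
    rw [div_le_iff₀ hτ0]
    simp only [smul_eq_mul] at hcv
    nlinarith [hcv]
  obtain ⟨d, hd, hd0⟩ := hstat y hy
  have hle : d ≤ φ (ψ y) - φ (ψ xbar) := by
    refine le_of_tendsto hd ?_
    filter_upwards [Ioc_mem_nhdsGT_of_mem (by simp : (0:ℝ) ∈ Set.Ico (0:ℝ) 1)] with τ hτ
    exact key τ hτ
  simp only
  linarith
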